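/- Let Q ⊂ ℝ^d, let ∂ be a subset of the boundary of Q with projection π_∂: Q → ∂ and distance function |x|_∂, and fix η ∈ (−2,−1). For a continuous function u: Q \ ∂ → ℝ satisfying |u(x)| ≤ M·|x|_∂^η, define the distribution (ℛu)(ψ) = ∫_Q u(x)(ψ(x) − ψ(π_∂ x)) dx for test functions ψ ∈ C_c^∞. Then ℛu is a well-defined distribution of Hölder regularity η: for every test function ψ supported in the unit ball with ‖ψ‖_{C^1} ≤ 1, every y and every λ ∈ (0,1], one has |(ℛu)(ψ_y^λ)| ≤ C·M·λ^η, where ψ_y^λ(x) = λ^{-|𝔰|} ψ((x−y)/λ) (with anisotropic scaling of scaled dimension |𝔰|) and C depends only on η, d and the geometry of Q. -/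

import Mathlib

open Real MeasureTheory

/-- The tetrahedron `Q = {x ∈ ℝ³ : 0 ≤ x₃ ≤ x₁ ≤ x₂ ≤ 1}` (coordinates indexed 0,1,2). -/
def tetraQ : Set (Fin 3 → ℝ) := {x | 0 ≤ x 2 ∧ x 2 ≤ x 0 ∧ x 0 ≤ x 1 ∧ x 1 ≤ 1}

/-- The projection to the boundary face `{x₃ = 0}`: `π_∂(x₁,x₂,x₃) = (x₁,x₂,0)`. -/
def projB (x : Fin 3 → ℝ) : Fin 3 → ℝ := ![x 0, x 1, 0]

/-! The difference `ψ_y^λ(x) - ψ_y^λ(π_∂ x)` vanishes unless `(x₁, x₂)` lies in a box of side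
`2λ` around `(y₁, y₂)`, and it is at most `min (2λ⁻³) (λ⁻⁴ x₃)` because `ψ` is bounded and
`1`-Lipschitz. Hence the integrand is dominated by a product `1_box(x₁) 1_box(x₂) g(x₃)` with
`g(t) = M t^η min (2λ⁻³) (λ⁻⁴ t)`, whose integral factorises. Splitting at `t = λ`,
`t^(η+1)` is integrable at `0` since `η > -2` and `t^η` at `∞` since `η < -1`; both pieces are
`O(λ^(η-2))`, and the box contributes `λ²`. -/

open Set Metric

lemma integrableOn_Ioc_zero_rpow {r c : ℝ} (hr : -1 < r) (hc : 0 < c) :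
    IntegrableOn (fun t : ℝ => t ^ r) (Ioc 0 c) :=
  (integrableOn_Ioc_iff_integrableOn_Ioo enorm_ne_top).2
    ((intervalIntegral.integrableOn_Ioo_rpow_iff hc).2 hr)

section profile
variable {η A B : ℝ}

lemma rpow_mul_min_le_left {t : ℝ} (ht : 0 ≤ t) :
    t ^ η * min A (B * t) ≤ A * t ^ η := by
  rw [mul_comm]; exact mul_le_mul_of_nonneg_right (min_le_left _ _) (rpow_nonneg ht η)

lemma rpow_mul_min_le_right {t : ℝ} (ht : 0 < t) :
    t ^ η * min A (B * t) ≤ B * t ^ (η + 1) := by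
  calc t ^ η * min A (B * t) ≤ t ^ η * (B * t) := by gcongr; exact min_le_right _ _
    _ = B * t ^ (η + 1) := by rw [rpow_add_one ht.ne']; ring

lemma rpow_mul_min_nonneg (hA : 0 ≤ A) (hB : 0 ≤ B) {t : ℝ} (ht : 0 ≤ t) :
    0 ≤ t ^ η * min A (B * t) := by
  have := le_min hA (mul_nonneg hB ht)
  positivity

lemma integrableOn_rpow_mul_min (hη₂ : -2 < η) (hη₁ : η < -1) (hA : 0 ≤ A) (hB : 0 ≤ B) :
    IntegrableOn (fun t => t ^ η * min A (B * t)) (Ioi 0) := by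
  have hc : (0 : ℝ) < 1 := one_pos
  have hmeas : AEStronglyMeasurable (fun t : ℝ => t ^ η * min A (B * t)) := by fun_prop
  rw [← Ioc_union_Ioi_eq_Ioi hc.le]
  refine IntegrableOn.union ?_ ?_
  · refine ((integrableOn_Ioc_zero_rpow (r := η + 1) (by linarith) hc).const_mul B).mono'
      hmeas.restrict ?_
    filter_upwards [ae_restrict_mem measurableSet_Ioc] with t ht
    rw [norm_of_nonneg (rpow_mul_min_nonneg hA hB ht.1.le)]
    exact rpow_mul_min_le_right ht.1
  · refine ((integrableOn_Ioi_rpow_of_lt hη₁ hc).const_mul A).mono' hmeas.restrict ?_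
    filter_upwards [ae_restrict_mem measurableSet_Ioi] with t ht
    rw [norm_of_nonneg (rpow_mul_min_nonneg hA hB (hc.trans ht).le)]
    exact rpow_mul_min_le_left (hc.trans ht).le

lemma setIntegral_rpow_mul_min_le (hη₂ : -2 < η) (hη₁ : η < -1) (hA : 0 ≤ A) (hB : 0 ≤ B)
    {c : ℝ} (hc : 0 < c) :
    ∫ t in Ioi 0, t ^ η * min A (B * t) ≤
      B * (c ^ (η + 2) / (η + 2)) + A * (c ^ (η + 1) / (-1 - η)) := by
  have hint := integrableOn_rpow_mul_min hη₂ hη₁ hA hB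
  rw [← Ioc_union_Ioi_eq_Ioi hc.le] at hint ⊢
  rw [setIntegral_union (Ioc_disjoint_Ioi le_rfl) measurableSet_Ioi
    (hint.mono_set subset_union_left) (hint.mono_set subset_union_right)]
  gcongr
  · calc ∫ t in Ioc 0 c, t ^ η * min A (B * t) ≤ ∫ t in Ioc 0 c, B * t ^ (η + 1) :=
          setIntegral_mono_on (hint.mono_set subset_union_left)
            ((integrableOn_Ioc_zero_rpow (r := η + 1) (by linarith) hc).const_mul B)
            measurableSet_Ioc
            fun t ht => rpow_mul_min_le_right ht.1
      _ = B * (c ^ (η + 2) / (η + 2)) := by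
          rw [integral_const_mul, ← intervalIntegral.integral_of_le hc.le,
            integral_rpow (Or.inl (by linarith)), zero_rpow (by linarith), sub_zero]
          ring_nf
  · calc ∫ t in Ioi c, t ^ η * min A (B * t) ≤ ∫ t in Ioi c, A * t ^ η :=
          setIntegral_mono_on (hint.mono_set subset_union_right)
            ((integrableOn_Ioi_rpow_of_lt hη₁ hc).const_mul A) measurableSet_Ioi
            fun t ht => rpow_mul_min_le_left (hc.trans ht).le
      _ = A * (c ^ (η + 1) / (-1 - η)) := by
          rw [integral_const_mul, integral_Ioi_rpow_of_lt hη₁ hc, neg_div, ← div_neg,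
            neg_add_rev, ← sub_eq_add_neg]
end profile


lemma abs_sub_le_min_two_dist {α : Type*} [PseudoMetricSpace α] {f : α → ℝ}
    (hf : LipschitzWith 1 f) (hf₁ : ∀ a, |f a| ≤ 1) (a b : α) :
    |f a - f b| ≤ min 2 (dist a b) := by
  refine le_min ?_ ?_
  · linarith [abs_sub (f a) (f b), hf₁ a, hf₁ b]
  · simpa [Real.dist_eq] using hf.dist_le_mul a b

lemma dist_projB_le (x : Fin 3 → ℝ) : dist x (projB x) ≤ |x 2| := by
  refine (dist_pi_le_iff (abs_nonneg _)).2 fun i => ?_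
  fin_cases i <;> simp [projB]

lemma dist_rescale {ι : Type*} [Fintype ι] (y x x' : ι → ℝ) {lam : ℝ} (hlam : 0 < lam) :
    dist (fun i => (x i - y i) / lam) (fun i => (x' i - y i) / lam) = dist x x' / lam := by
  have h (z : ι → ℝ) : (fun i => (z i - y i) / lam) = lam⁻¹ • (z - y) := by
    ext i; simp [div_eq_inv_mul]
  rw [h, h, dist_smul₀, dist_sub_right, norm_inv, norm_of_nonneg hlam.le, inv_mul_eq_div]

/-- The rescaled test function `ψ_y^λ`, with scaled dimension `3`. -/
noncomputable def scaledTest (ψ : (Fin 3 → ℝ) → ℝ) (y : Fin 3 → ℝ) (lam : ℝ) (x : Fin 3 → ℝ) :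
    ℝ :=
  lam⁻¹ ^ 3 * ψ fun i => (x i - y i) / lam

section scaledTest
variable {ψ : (Fin 3 → ℝ) → ℝ} {y : Fin 3 → ℝ} {lam : ℝ}

lemma abs_scaledTest_sub_projB_le (hψ : LipschitzWith 1 ψ) (hψ₁ : ∀ x, |ψ x| ≤ 1)
    (hlam : 0 < lam) (x : Fin 3 → ℝ) :
    |scaledTest ψ y lam x - scaledTest ψ y lam (projB x)| ≤
      min (2 * lam⁻¹ ^ 3) (lam⁻¹ ^ 4 * |x 2|) := by
  have hdist := dist_rescale y x (projB x) hlam ▸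
    div_le_div_of_nonneg_right (dist_projB_le x) hlam.le
  calc |scaledTest ψ y lam x - scaledTest ψ y lam (projB x)|
      = lam⁻¹ ^ 3 * |ψ (fun i => (x i - y i) / lam) - ψ (fun i => (projB x i - y i) / lam)| := by
        rw [scaledTest, scaledTest, ← mul_sub, abs_mul, abs_of_nonneg (by positivity)]
    _ ≤ lam⁻¹ ^ 3 * min 2 (|x 2| / lam) := by
        gcongr
        exact (abs_sub_le_min_two_dist hψ hψ₁ _ _).trans (min_le_min_left _ hdist)
    _ = min (2 * lam⁻¹ ^ 3) (lam⁻¹ ^ 4 * |x 2|) := by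
        rw [mul_min_of_nonneg _ _ (by positivity)]
        congr 1 <;> ring

lemma scaledTest_eq_zero (hψs : ∀ x, 1 < √(x 0 ^ 2 + x 1 ^ 2 + x 2 ^ 2) → ψ x = 0)
    (hlam : 0 < lam) {x : Fin 3 → ℝ} (i : Fin 3) (hi : x i ∉ closedBall (y i) lam) :
    scaledTest ψ y lam x = 0 := by
  have hi' : 1 < |(x i - y i) / lam| := by
    rw [abs_div, abs_of_pos hlam, one_lt_div hlam]
    simpa [Real.dist_eq] using hi
  rw [scaledTest, hψs _ ?_, mul_zero]
  rw [Real.lt_sqrt zero_le_one, one_pow]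
  have hsq : ((x i - y i) / lam) ^ 2 ≤ ∑ j, ((x j - y j) / lam) ^ 2 :=
    Finset.single_le_sum (f := fun j => ((x j - y j) / lam) ^ 2) (fun j _ => sq_nonneg _)
      (Finset.mem_univ i)
  rw [Fin.sum_univ_three] at hsq
  linarith [one_lt_sq_iff_one_lt_abs _ |>.2 hi']

lemma scaledTest_sub_projB_eq_zero (hψs : ∀ x, 1 < √(x 0 ^ 2 + x 1 ^ 2 + x 2 ^ 2) → ψ x = 0)
    (hlam : 0 < lam) {x : Fin 3 → ℝ} (i : Fin 3) (hi₂ : i ≠ 2)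
    (hi : x i ∉ closedBall (y i) lam) :
    scaledTest ψ y lam x - scaledTest ψ y lam (projB x) = 0 := by
  have hproj : projB x i = x i := by fin_cases i <;> simp_all [projB]
  rw [scaledTest_eq_zero hψs hlam i hi, scaledTest_eq_zero hψs hlam i (hproj ▸ hi), sub_zero]

end scaledTest

lemma measurableSet_tetraQ : MeasurableSet tetraQ := by
  simp only [tetraQ, ofPred_and]
  measurability

noncomputable def boundaryMajorant (η M lam : ℝ) (y : Fin 3 → ℝ) : Fin 3 → ℝ → ℝ :=
  ![(closedBall (y 0) lam).indicator 1, (closedBall (y 1) lam).indicator 1,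
    (Ioi 0).indicator fun t => M * (t ^ η * min (2 * lam⁻¹ ^ 3) (lam⁻¹ ^ 4 * t))]

section boundaryMajorant
variable {η M lam : ℝ} {y : Fin 3 → ℝ}

lemma boundaryMajorant_nonneg (hM : 0 ≤ M) (hlam : 0 < lam) (i : Fin 3) (t : ℝ) :
    0 ≤ boundaryMajorant η M lam y i t := by
  fin_cases i
  · exact indicator_nonneg (fun _ _ => zero_le_one) t
  · exact indicator_nonneg (fun _ _ => zero_le_one) t
  · exact indicator_nonneg (fun t ht => mul_nonneg hM
      (rpow_mul_min_nonneg (by positivity) (by positivity) (le_of_lt ht))) t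

lemma prod_boundaryMajorant_nonneg (hM : 0 ≤ M) (hlam : 0 < lam) (x : Fin 3 → ℝ) :
    0 ≤ ∏ i, boundaryMajorant η M lam y i (x i) :=
  Finset.prod_nonneg fun i _ => boundaryMajorant_nonneg hM hlam i (x i)

lemma integrable_boundaryMajorant (hη : η ∈ Ioo (-2) (-1)) (hlam : 0 < lam) (i : Fin 3) :
    Integrable (boundaryMajorant η M lam y i) := by
  fin_cases i
  · exact (integrable_indicator_iff measurableSet_closedBall).2
      (integrableOn_const measure_closedBall_lt_top.ne)
  · exact (integrable_indicator_iff measurableSet_closedBall).2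
      (integrableOn_const measure_closedBall_lt_top.ne)
  · exact (integrable_indicator_iff measurableSet_Ioi).2 <|
      (integrableOn_rpow_mul_min hη.1 hη.2 (by positivity) (by positivity)).const_mul M

lemma integral_prod_boundaryMajorant_le (hη : η ∈ Ioo (-2) (-1)) (hM : 0 ≤ M) (hlam : 0 < lam) :
    ∫ x : Fin 3 → ℝ, ∏ i, boundaryMajorant η M lam y i (x i) ≤
      (4 / (η + 2) + 8 / (-1 - η)) * M * lam ^ η := by
  obtain ⟨hη₂, hη₁⟩ := hη
  rw [integral_fin_nat_prod_volume_eq_prod, Fin.prod_univ_three]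
  simp only [boundaryMajorant, Matrix.cons_val_zero, Matrix.cons_val_one, Matrix.cons_val_two,
    Matrix.tail_cons, Matrix.head_cons, integral_indicator_one measurableSet_closedBall,
    volume_real_closedBall hlam.le,
    integral_indicator measurableSet_Ioi, integral_const_mul]
  calc 2 * lam * (2 * lam) * (M * ∫ t in Ioi 0, t ^ η * min (2 * lam⁻¹ ^ 3) (lam⁻¹ ^ 4 * t))
      ≤ 2 * lam * (2 * lam) * (M * (lam⁻¹ ^ 4 * (lam ^ (η + 2) / (η + 2)) +
          2 * lam⁻¹ ^ 3 * (lam ^ (η + 1) / (-1 - η)))) := by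
        gcongr
        exact setIntegral_rpow_mul_min_le hη₂ hη₁ (by positivity) (by positivity) hlam
    _ = (4 / (η + 2) + 8 / (-1 - η)) * M * lam ^ η := by
        rw [rpow_add hlam, rpow_add_one hlam.ne', rpow_two]
        field_simp
        ring

lemma norm_mul_scaledTest_sub_projB_le {ψ : (Fin 3 → ℝ) → ℝ} (hψ : LipschitzWith 1 ψ)
    (hψ₁ : ∀ x, |ψ x| ≤ 1) (hψs : ∀ x, 1 < √(x 0 ^ 2 + x 1 ^ 2 + x 2 ^ 2) → ψ x = 0)
    (hM : 0 ≤ M) (hlam : 0 < lam) {x : Fin 3 → ℝ} (hx : 0 ≤ x 2) {v : ℝ}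
    (hv : x 2 ≠ 0 → |v| ≤ M * x 2 ^ η) :
    ‖v * (scaledTest ψ y lam x - scaledTest ψ y lam (projB x))‖ ≤
      ∏ i, boundaryMajorant η M lam y i (x i) := by
  have hnonneg := prod_boundaryMajorant_nonneg (η := η) (y := y) hM hlam x
  by_cases h0 : x 0 ∈ closedBall (y 0) lam; swap
  · rwa [scaledTest_sub_projB_eq_zero hψs hlam 0 (by decide) h0, mul_zero, norm_zero]
  by_cases h1 : x 1 ∈ closedBall (y 1) lam; swap
  · rwa [scaledTest_sub_projB_eq_zero hψs hlam 1 (by decide) h1, mul_zero, norm_zero]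
  rcases hx.eq_or_lt with hx₀ | hx₀
  · have hproj : projB x = x := by ext i; fin_cases i <;> simp [projB, hx₀]
    rwa [hproj, sub_self, mul_zero, norm_zero]
  rw [Fin.prod_univ_three]
  simp only [boundaryMajorant, Matrix.cons_val_zero, Matrix.cons_val_one, Matrix.cons_val_two,
    Matrix.tail_cons, Matrix.head_cons, indicator_of_mem h0, indicator_of_mem h1,
    indicator_of_mem (mem_Ioi.2 hx₀), Pi.one_apply, one_mul]
  rw [norm_mul, norm_eq_abs, norm_eq_abs, ← mul_assoc]
  have hdiff := abs_scaledTest_sub_projB_le (y := y) hψ hψ₁ hlam x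
  rw [abs_of_pos hx₀] at hdiff
  exact mul_le_mul (hv hx₀.ne') hdiff (abs_nonneg _) (by positivity)

end boundaryMajorant

/-- Boundary renormalisation operator `ℛ`: for `η ∈ (-2,-1)` and `u` continuous away
from the boundary face with `|u(x)| ≤ M x₃^η`, the distribution
`(ℛu)(ψ) = ∫_Q u(x)(ψ(x) - ψ(π_∂ x)) dx` has Hölder regularity `η`:
`|(ℛu)(ψ_y^λ)| ≤ C M λ^η` for all suitably normalised `C¹` test functions `ψ`
supported in the unit ball, with `ψ_y^λ(x) = λ^{-3} ψ((x-y)/λ)`. -/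
theorem boundary_renormalisation_regularity (η : ℝ) (hη : η ∈ Set.Ioo (-2 : ℝ) (-1)) :
    ∃ C : ℝ, 0 < C ∧ ∀ M : ℝ, 0 ≤ M → ∀ u : (Fin 3 → ℝ) → ℝ,
      ContinuousOn u (tetraQ \ {x | x 2 = 0}) →
      (∀ x ∈ tetraQ, x 2 ≠ 0 → |u x| ≤ M * (x 2) ^ η) →
      ∀ ψ : (Fin 3 → ℝ) → ℝ, ContDiff ℝ 1 ψ →
        (∀ x : Fin 3 → ℝ, 1 < Real.sqrt ((x 0) ^ 2 + (x 1) ^ 2 + (x 2) ^ 2) → ψ x = 0) →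
        (∀ x, |ψ x| ≤ 1) → (∀ x, ‖fderiv ℝ ψ x‖ ≤ 1) →
        ∀ y : Fin 3 → ℝ, ∀ lam : ℝ, lam ∈ Set.Ioc (0 : ℝ) 1 →
          |∫ x in tetraQ,
              u x * ((lam⁻¹ ^ 3 * ψ fun i => (x i - y i) / lam) -
                (lam⁻¹ ^ 3 * ψ fun i => (projB x i - y i) / lam))|
            ≤ C * M * lam ^ η := by
  have h₂ : 0 < η + 2 := by linarith [hη.1]
  have h₁ : 0 < -1 - η := by linarith [hη.2]
  refine ⟨4 / (η + 2) + 8 / (-1 - η), by positivity,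
    fun M hM u _ hu ψ hψ hψs hψ₁ hψ' y lam hlam => ?_⟩
  have hLip : LipschitzWith 1 ψ := lipschitzWith_of_nnnorm_fderiv_le
    (hψ.differentiable one_ne_zero) fun x => by exact_mod_cast hψ' x
  have hint : Integrable fun x : Fin 3 → ℝ => ∏ i, boundaryMajorant η M lam y i (x i) :=
    volume_pi (α := fun _ : Fin 3 => ℝ) ▸
      Integrable.fin_nat_prod fun i => integrable_boundaryMajorant hη hlam.1 i
  rw [← norm_eq_abs]
  calc _ ≤ ∫ x in tetraQ, ∏ i, boundaryMajorant η M lam y i (x i) :=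
        norm_integral_le_of_norm_le hint.integrableOn <|
          ae_restrict_of_forall_mem measurableSet_tetraQ fun x hx =>
            norm_mul_scaledTest_sub_projB_le hLip hψ₁ hψs hM hlam.1 hx.1 (hu x hx)
    _ ≤ ∫ x : Fin 3 → ℝ, ∏ i, boundaryMajorant η M lam y i (x i) :=
        setIntegral_le_integral hint <|
          Filter.Eventually.of_forall (prod_boundaryMajorant_nonneg hM hlam.1)
    _ ≤ _ := integral_prod_boundaryMajorant_le hη hM hlam.1
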